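/- For all x ∈ (0, π/2), one has 3·exp(−x²/6) − 2 < cos x < (π·exp(−(π−2)x²/(2π)) − 2)/(π − 2). -/

import Mathlib

/-!
For `t ≥ 0` the Taylor polynomials of `cos t` and `exp (-t)` bound the function alternately from
above and below: integrating the bound of one order gives the next. Bounding `exp` by its Taylor
polynomials and `cos x` by those of degree 6 and 8, each inequality reduces to a polynomial
inequality in `x ^ 2` and `π`, which holds as long as `x ^ 2 < π ^ 2 / 4`.
-/

open Real Finset Nat

lemma le_of_hasDerivAt_nonneg {f f' : ℝ → ℝ} {a x : ℝ} (hf : ∀ y, HasDerivAt f (f' y) y)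
    (hf' : ∀ y, a ≤ y → 0 ≤ f' y) (hax : a ≤ x) : f a ≤ f x := by
  -- The exponent `(π - 2) / (2 * π)` is chosen so that the terms of order `< 4` cancel.
  have hdiff : Differentiable ℝ f := fun y ↦ (hf y).differentiableAt
  refine monotoneOn_of_hasDerivWithinAt_nonneg (convex_Ici a) hdiff.continuous.continuousOn
    (fun y _ ↦ (hf y).hasDerivWithinAt) (fun y hy ↦ hf' y ?_) Set.self_mem_Ici hax hax
  rw [interior_Ici] at hy
  exact le_of_lt hy

lemma hasDerivAt_pow_succ_div_factorial (m : ℕ) (x : ℝ) :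
    HasDerivAt (fun y : ℝ ↦ y ^ (m + 1) / (m + 1)!) (x ^ m / m !) x :=
  ((hasDerivAt_pow (m + 1) x).div_const _).congr_deriv <| by
    rw [factorial_succ]
    push_cast
    field_simp

noncomputable def cosTaylor (n : ℕ) (x : ℝ) : ℝ :=
  ∑ k ∈ range n, (-1) ^ k * x ^ (2 * k) / (2 * k)!

noncomputable def sinTaylor (n : ℕ) (x : ℝ) : ℝ :=
  ∑ k ∈ range n, (-1) ^ k * x ^ (2 * k + 1) / (2 * k + 1)!

noncomputable def expNegTaylor (n : ℕ) (t : ℝ) : ℝ :=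
  ∑ k ∈ range n, (-t) ^ k / k !

lemma hasDerivAt_sinTaylor (n : ℕ) (x : ℝ) : HasDerivAt (sinTaylor n) (cosTaylor n x) x := by
  unfold sinTaylor cosTaylor
  refine HasDerivAt.fun_sum fun k _ ↦ ?_
  simpa only [mul_div_assoc] using
    (hasDerivAt_pow_succ_div_factorial (2 * k) x).const_mul ((-1) ^ k)

lemma hasDerivAt_cosTaylor_succ (n : ℕ) (x : ℝ) :
    HasDerivAt (cosTaylor (n + 1)) (-sinTaylor n x) x := by
  have h : cosTaylor (n + 1) =
      fun y : ℝ ↦ ∑ k ∈ range n, (-1) ^ (k + 1) * y ^ (2 * k + 2) / (2 * k + 2)! + 1 := by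
    ext y
    simp [cosTaylor, sum_range_succ', mul_add]
  rw [h, sinTaylor, ← sum_neg_distrib]
  refine (HasDerivAt.fun_sum fun k _ ↦ ?_).add_const 1
  simp only [mul_div_assoc]
  exact ((hasDerivAt_pow_succ_div_factorial (2 * k + 1) x).const_mul _).congr_deriv (by ring)

lemma hasDerivAt_expNegTaylor_succ (n : ℕ) (t : ℝ) :
    HasDerivAt (expNegTaylor (n + 1)) (-expNegTaylor n t) t := by
  have h : expNegTaylor (n + 1) =
      fun s : ℝ ↦ ∑ k ∈ range n, (-s) ^ (k + 1) / (k + 1)! + 1 := by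
    ext s
    simp [expNegTaylor, sum_range_succ']
  rw [h, expNegTaylor, ← sum_neg_distrib]
  refine (HasDerivAt.fun_sum fun k _ ↦ ?_).add_const 1
  exact ((hasDerivAt_pow_succ_div_factorial k (-t)).comp t (hasDerivAt_neg t)).congr_deriv
    (by ring)

lemma neg_one_pow_mul_sinTaylor_sub_sin_nonneg_of_cos {n : ℕ}
    (hcos : ∀ y, 0 ≤ y → 0 ≤ (-1) ^ n * (cosTaylor (n + 1) y - cos y))
    {x : ℝ} (hx : 0 ≤ x) :
    0 ≤ (-1) ^ n * (sinTaylor (n + 1) x - sin x) := by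
  have hderiv (y : ℝ) : HasDerivAt (fun y ↦ (-1) ^ n * (sinTaylor (n + 1) y - sin y))
      ((-1) ^ n * (cosTaylor (n + 1) y - cos y)) y :=
    ((hasDerivAt_sinTaylor (n + 1) y).sub (hasDerivAt_sin y)).const_mul _
  simpa [sinTaylor] using le_of_hasDerivAt_nonneg hderiv hcos hx

lemma neg_one_pow_mul_cosTaylor_sub_cos_nonneg (n : ℕ) {x : ℝ} (hx : 0 ≤ x) :
    0 ≤ (-1) ^ n * (cosTaylor (n + 1) x - cos x) := by
  induction n generalizing x with
  | zero => simpa [cosTaylor] using cos_le_one x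
  | succ n ih =>
    have hderiv (y : ℝ) : HasDerivAt (fun y ↦ (-1) ^ (n + 1) * (cosTaylor (n + 2) y - cos y))
        ((-1) ^ n * (sinTaylor (n + 1) y - sin y)) y :=
      (((hasDerivAt_cosTaylor_succ (n + 1) y).sub (hasDerivAt_cos y)).const_mul _).congr_deriv
        (by ring)
    simpa [cosTaylor, sum_range_succ'] using
      le_of_hasDerivAt_nonneg hderiv
        (fun y hy ↦ neg_one_pow_mul_sinTaylor_sub_sin_nonneg_of_cos (fun _ ↦ ih) hy) hx

lemma neg_one_pow_mul_expNegTaylor_sub_exp_neg_nonneg (n : ℕ) {t : ℝ} (ht : 0 ≤ t) :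
    0 ≤ (-1) ^ n * (expNegTaylor (n + 1) t - exp (-t)) := by
  induction n generalizing t with
  | zero => simpa [expNegTaylor] using exp_le_one_iff.2 (neg_nonpos.2 ht)
  | succ n ih =>
    have hderiv (s : ℝ) :
        HasDerivAt (fun s ↦ (-1) ^ (n + 1) * (expNegTaylor (n + 2) s - exp (-s)))
          ((-1) ^ n * (expNegTaylor (n + 1) s - exp (-s))) s :=
      (((hasDerivAt_expNegTaylor_succ (n + 1) s).sub (hasDerivAt_neg s).exp).const_mul
        _).congr_deriv (by ring)
    simpa [expNegTaylor, sum_range_succ'] using le_of_hasDerivAt_nonneg hderiv (fun _ ↦ ih) ht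

lemma cosTaylor_four (x : ℝ) : cosTaylor 4 x = 1 - x ^ 2 / 2 + x ^ 4 / 24 - x ^ 6 / 720 := by
  norm_num [cosTaylor, sum_range_succ, factorial]
  ring

lemma cosTaylor_five (x : ℝ) :
    cosTaylor 5 x = 1 - x ^ 2 / 2 + x ^ 4 / 24 - x ^ 6 / 720 + x ^ 8 / 40320 := by
  norm_num [cosTaylor, sum_range_succ, factorial]
  ring

lemma expNegTaylor_four (t : ℝ) : expNegTaylor 4 t = 1 - t + t ^ 2 / 2 - t ^ 3 / 6 := by
  norm_num [expNegTaylor, sum_range_succ, factorial]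
  ring

lemma expNegTaylor_five (t : ℝ) :
    expNegTaylor 5 t = 1 - t + t ^ 2 / 2 - t ^ 3 / 6 + t ^ 4 / 24 := by
  norm_num [expNegTaylor, sum_range_succ, factorial]
  ring

lemma three_mul_exp_neg_sq_div_six_sub_two_lt_cos {x : ℝ} (hx0 : 0 < x) (hx : x ^ 2 < 48 / 5) :
    3 * exp (-x ^ 2 / 6) - 2 < cos x := by
  have hexp := neg_one_pow_mul_expNegTaylor_sub_exp_neg_nonneg 4
    (t := x ^ 2 / 6) (by positivity)
  have hcos := neg_one_pow_mul_cosTaylor_sub_cos_nonneg 3 hx0.le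
  rw [expNegTaylor_five] at hexp
  rw [cosTaylor_four] at hcos
  rw [neg_div]
  have : 0 < x ^ 6 * (48 / 5 - x ^ 2) := by have := pow_pos hx0 6; nlinarith
  nlinarith

lemma pi_sub_two_mul_cosTaylor_five_lt {x : ℝ} (hx0 : 0 < x) (hx : x < π / 2) :
    (π - 2) * cosTaylor 5 x < π * expNegTaylor 4 ((π - 2) * x ^ 2 / (2 * π)) - 2 := by
  have hπ := pi_gt_d6
  have hπ' := pi_lt_d6
  have hP :
      0 < 4 * π * (π - 3) - ((π - 2) ^ 2 - π ^ 2 / 15) * x ^ 2 - π ^ 2 * x ^ 4 / 840 := by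
    have hx2 : x ^ 2 < 2.4675 := by nlinarith
    have hx4 : x ^ 4 < 6.1 := by nlinarith
    have h1 : 1.77 < 4 * π * (π - 3) := by nlinarith
    have h2 : (π - 2) ^ 2 - π ^ 2 / 15 < 0.65 := by nlinarith
    have h3 : π ^ 2 < 9.87 := by nlinarith
    nlinarith [mul_lt_mul_of_pos_left hx4 (by positivity : (0 : ℝ) < π ^ 2),
      mul_le_mul_of_nonneg_right h2.le (sq_nonneg x)]
  -- The exponent `(π - 2) / (2 * π)` is chosen so that the terms of order `< 4` cancel.
  have hdiff : π * expNegTaylor 4 ((π - 2) * x ^ 2 / (2 * π)) - 2 - (π - 2) * cosTaylor 5 x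
      = (π - 2) * x ^ 4 * (4 * π * (π - 3) - ((π - 2) ^ 2 - π ^ 2 / 15) * x ^ 2
          - π ^ 2 * x ^ 4 / 840) / (48 * π ^ 2) := by
    rw [expNegTaylor_four, cosTaylor_five]
    field_simp
    ring
  have : 0 < π - 2 := by linarith
  have : 0 < π * expNegTaylor 4 ((π - 2) * x ^ 2 / (2 * π)) - 2 - (π - 2) * cosTaylor 5 x := by
    rw [hdiff]
    positivity
  linarith

lemma cos_lt_pi_mul_exp_sub_two_div {x : ℝ} (hx0 : 0 < x) (hx : x < π / 2) :
    cos x < (π * exp (-(π - 2) * x ^ 2 / (2 * π)) - 2) / (π - 2) := by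
  have hπ : 0 < π - 2 := by linarith [pi_gt_three]
  have hexp := neg_one_pow_mul_expNegTaylor_sub_exp_neg_nonneg 3
    (t := (π - 2) * x ^ 2 / (2 * π)) (by positivity)
  have hcos := neg_one_pow_mul_cosTaylor_sub_cos_nonneg 4 hx0.le
  rw [lt_div_iff₀ hπ, neg_mul, neg_div]
  nlinarith [pi_sub_two_mul_cosTaylor_five_lt hx0 hx, pi_pos]

theorem stmt18 (x : ℝ) (h0 : 0 < x) (h1 : x < π / 2) :
    3 * Real.exp (-x ^ 2 / 6) - 2 < Real.cos x ∧
    Real.cos x < (π * Real.exp (-(π - 2) * x ^ 2 / (2 * π)) - 2) / (π - 2) :=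
  ⟨three_mul_exp_neg_sq_div_six_sub_two_lt_cos h0 (by nlinarith [pi_lt_d2]),
    cos_lt_pi_mul_exp_sub_two_div h0 h1⟩
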